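/- arXiv:1909.03164 — 5 statements merged into one kernel-verified Lean document; each statement's English description precedes it below -/
import Mathlib

section
/- Let k = (k_1,...,k_s, −k_{s+1},...,−k_n) with all k_j positive integers, K = lcm(k_1,...,k_n), and ℓ_j = K/k_j. Let φ(z) = (z_1^{ℓ_1}, ..., z_n^{ℓ_n}). Then for every z ∈ ℂⁿ, φ(z) ∈ ℋ(k) if and only if z ∈ Ω_{n,s}, where ℋ(k) = {z ∈ 𝔻ⁿ : |z^k| < 1, z^k defined} and Ω_{n,s} = {z ∈ 𝔻ⁿ : |z_1⋯z_s| < |z_{s+1}⋯z_n|}. -/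
/-- the standard diagonal map `φ(z) = (z_1^{ℓ_1}, …, z_n^{ℓ_n})`
satisfies `φ⁻¹(ℋ(k)) = Ω_{n,s}`. -/
theorem stmt_2 (n s : ℕ) (hs : 1 ≤ s) (hsn : s < n)
    (k : Fin n → ℕ) (hk : ∀ j, 0 < k j)
    (K : ℕ) (hK : K = Finset.univ.lcm k)
    (ℓ : Fin n → ℕ) (hℓ : ∀ j, ℓ j = K / k j)
    (φ : (Fin n → ℂ) → (Fin n → ℂ))
    (hφ : ∀ z j, φ z j = (z j) ^ (ℓ j)) :
    ∀ z : Fin n → ℂ,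
      ((∀ j, ‖φ z j‖ < 1) ∧
        (∀ j : Fin n, s ≤ (j : ℕ) → φ z j ≠ 0) ∧
        ‖∏ j, (φ z j) ^ (if (j : ℕ) < s then (k j : ℤ) else -(k j : ℤ))‖ < 1)
      ↔ ((∀ j, ‖z j‖ < 1) ∧
          ‖∏ j ∈ Finset.univ.filter (fun j : Fin n => (j : ℕ) < s), z j‖ <
            ‖∏ j ∈ Finset.univ.filter (fun j : Fin n => s ≤ (j : ℕ)), z j‖) := by
  intro z
  set a : Fin n → ℝ := fun j => ‖z j‖ with ha
  have hdvd : ∀ j, k j ∣ K := fun j => hK ▸ Finset.dvd_lcm (Finset.mem_univ j)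
  have hKpos : 0 < K := by
    rcases Nat.eq_zero_or_pos K with h | h
    · exfalso
      have := hK.symm.trans h
      rw [Finset.lcm_eq_zero_iff] at this
      obtain ⟨j, _, hj⟩ := this
      exact (hk j).ne' hj
    · exact h
  have hℓk : ∀ j, ℓ j * k j = K := fun j => by
    rw [hℓ]; exact Nat.div_mul_cancel (hdvd j)
  have hℓpos : ∀ j, 0 < ℓ j := fun j => by
    rw [hℓ]; exact Nat.div_pos (Nat.le_of_dvd hKpos (hdvd j)) (hk j)
  have h1 : (∀ j, ‖φ z j‖ < 1) ↔ ∀ j, ‖z j‖ < 1 := by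
    refine forall_congr' fun j => ?_
    rw [hφ, norm_pow]
    exact pow_lt_one_iff_of_nonneg (norm_nonneg _) (hℓpos j).ne'
  have hAB : ‖∏ j ∈ Finset.univ.filter (fun j : Fin n => (j : ℕ) < s), z j‖
      = ∏ j ∈ Finset.univ.filter (fun j : Fin n => (j : ℕ) < s), a j :=
    norm_prod _ _
  have hBB : ‖∏ j ∈ Finset.univ.filter (fun j : Fin n => s ≤ (j : ℕ)), z j‖
      = ∏ j ∈ Finset.univ.filter (fun j : Fin n => s ≤ (j : ℕ)), a j :=
    norm_prod _ _
  have key : ‖∏ j, (φ z j) ^ (if (j : ℕ) < s then (k j : ℤ) else -(k j : ℤ))‖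
      = (∏ j ∈ Finset.univ.filter (fun j : Fin n => (j : ℕ) < s), a j) ^ K
        / (∏ j ∈ Finset.univ.filter (fun j : Fin n => s ≤ (j : ℕ)), a j) ^ K := by
    rw [norm_prod,
      ← Finset.prod_filter_mul_prod_filter_not Finset.univ (fun j : Fin n => (j : ℕ) < s)]
    have e1 : ∀ j ∈ Finset.univ.filter (fun j : Fin n => (j : ℕ) < s),
        ‖(φ z j) ^ (if (j : ℕ) < s then (k j : ℤ) else -(k j : ℤ))‖ = a j ^ K := by
      intro j hj
      simp only [Finset.mem_filter] at hj
      rw [if_pos hj.2, zpow_natCast, norm_pow, hφ, norm_pow, ← pow_mul, hℓk]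
    have e2 : ∀ j ∈ Finset.univ.filter (fun j : Fin n => ¬ (j : ℕ) < s),
        ‖(φ z j) ^ (if (j : ℕ) < s then (k j : ℤ) else -(k j : ℤ))‖
          = (a j ^ K)⁻¹ := by
      intro j hj
      simp only [Finset.mem_filter] at hj
      rw [if_neg hj.2, zpow_neg, zpow_natCast, norm_inv, norm_pow, hφ, norm_pow, ← pow_mul, hℓk]
    rw [Finset.prod_congr rfl e1, Finset.prod_congr rfl e2, Finset.prod_inv_distrib,
      ← Finset.prod_pow, ← Finset.prod_pow, div_eq_mul_inv]
    congr 3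
    ext j
    simp [not_lt]
  constructor
  · rintro ⟨hlt, hne, hprod⟩
    have hz : ∀ j : Fin n, s ≤ (j : ℕ) → z j ≠ 0 := by
      intro j hj h0
      exact hne j hj (by rw [hφ, h0, zero_pow (hℓpos j).ne'])
    have hBpos : 0 < ∏ j ∈ Finset.univ.filter (fun j : Fin n => s ≤ (j : ℕ)), a j := by
      refine Finset.prod_pos fun j hj => ?_
      simp only [Finset.mem_filter] at hj
      exact norm_pos_iff.mpr (hz j hj.2)
    refine ⟨h1.mp hlt, ?_⟩
    rw [key, div_lt_one (pow_pos hBpos K)] at hprod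
    rw [hAB, hBB]
    exact lt_of_pow_lt_pow_left₀ K (le_of_lt hBpos) hprod
  · rintro ⟨hlt, hprod⟩
    have hBpos : 0 < ‖∏ j ∈ Finset.univ.filter
        (fun j : Fin n => s ≤ (j : ℕ)), z j‖ :=
      lt_of_le_of_lt (norm_nonneg _) hprod
    have hz : ∀ j : Fin n, s ≤ (j : ℕ) → z j ≠ 0 := by
      intro j hj h0
      refine hBpos.ne' ?_
      rw [norm_eq_zero]
      exact Finset.prod_eq_zero (by simp [hj]) h0
    have hBpos' : 0 < ∏ j ∈ Finset.univ.filter (fun j : Fin n => s ≤ (j : ℕ)), a j := by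
      rw [← hBB]; exact hBpos
    refine ⟨h1.mpr hlt, fun j hj => by rw [hφ]; exact pow_ne_zero _ (hz j hj), ?_⟩
    rw [key, div_lt_one (pow_pos hBpos' K)]
    rw [hAB, hBB] at hprod
    exact pow_lt_pow_left₀ hprod (Finset.prod_nonneg fun j _ => norm_nonneg _) (hKpos.ne')
end

section
/- Define 𝒟_{n,s}(β) = (1/πⁿ) ∫_{Ω_{n,s}} |z^{β−𝟏}|² dV(z) for β with all relevant integrals finite. Then 𝒟_{n+1,s}(β, β_{n+1}) = (1/β_{n+1}) (𝒟_{n,s}(β) − 𝒟_{n,s}(β*)), where β*_j = β_j + β_{n+1} for 1 ≤ j ≤ s and β*_j = β_j − β_{n+1} for s+1 ≤ j ≤ n, provided β_{n+1} ≠ 0. -/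
open MeasureTheory

/-- The model elementary Reinhardt domain `Ω_{n,s}`. -/
def modelDomain (n s : ℕ) : Set (Fin n → ℂ) :=
  {z | (∀ j, ‖(z j)‖ < 1) ∧
    ‖(∏ j ∈ Finset.univ.filter (fun j : Fin n => (j : ℕ) < s), z j)‖ <
      ‖(∏ j ∈ Finset.univ.filter (fun j : Fin n => s ≤ (j : ℕ)), z j)‖}

/-- `𝒟_{n,s}(β) = (1/πⁿ) ∫_{Ω_{n,s}} |z^{β−𝟏}|² dV(z)`. -/
noncomputable def Dcal (n s : ℕ) (β : Fin n → ℤ) : ℝ :=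
  (1 / Real.pi ^ n) * ∫ z in modelDomain n s, (‖(∏ j, (z j) ^ (β j - 1))‖) ^ 2

lemma isOpen_modelDomain (n s : ℕ) : IsOpen (modelDomain n s) := by
  unfold modelDomain
  have h1 : IsOpen {z : Fin n → ℂ | ∀ j, ‖(z j)‖ < 1} := by
    have : {z : Fin n → ℂ | ∀ j, ‖(z j)‖ < 1}
        = ⋂ j, {z : Fin n → ℂ | ‖(z j)‖ < 1} := by
      ext z; simp
    rw [this]
    exact isOpen_iInter_of_finite fun j =>
      isOpen_lt ((continuous_norm).comp (continuous_apply j)) continuous_const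
  have h2 : IsOpen {z : Fin n → ℂ |
      ‖(∏ j ∈ Finset.univ.filter (fun j : Fin n => (j : ℕ) < s), z j)‖ <
      ‖(∏ j ∈ Finset.univ.filter (fun j : Fin n => s ≤ (j : ℕ)), z j)‖} := by
    apply isOpen_lt
    · exact (continuous_norm).comp (continuous_finset_prod _ fun j _ => continuous_apply j)
    · exact (continuous_norm).comp (continuous_finset_prod _ fun j _ => continuous_apply j)
  exact h1.inter h2


lemma annulus_open (r : ℝ) : IsOpen {w : ℂ | r < ‖w‖ ∧ ‖w‖ < 1} :=
  (isOpen_lt continuous_const continuous_norm).inter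
    (isOpen_lt continuous_norm continuous_const)

lemma annulus_int (b : ℤ) (hb : b ≠ 0) (r : ℝ) (hr0 : 0 < r) (hr1 : r < 1) :
    ∫ w : ℂ in {w : ℂ | r < ‖w‖ ∧ ‖w‖ < 1},
      (‖(w ^ (b - 1))‖) ^ 2 = Real.pi * (1 - r ^ (2 * b)) / b := by
  have key := Complex.integral_comp_polarCoord_symm
    (Set.indicator {w : ℂ | r < ‖w‖ ∧ ‖w‖ < 1}
      (fun w => (‖(w ^ (b - 1))‖) ^ 2))
  rw [← integral_indicator (annulus_open r).measurableSet, ← key]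
  have hcongr : ∀ p ∈ polarCoord.target,
      p.1 • (Set.indicator {w : ℂ | r < ‖w‖ ∧ ‖w‖ < 1}
        (fun w => (‖(w ^ (b - 1))‖) ^ 2)) (Complex.polarCoord.symm p)
      = (Set.indicator (Set.Ioo r 1) (fun ρ => ρ ^ (2 * b - 1)) p.1) * (1 : ℝ) := by
    intro p hp
    have hp1 : (0:ℝ) < p.1 := hp.1
    have habs : ‖(Complex.polarCoord.symm p)‖ = p.1 := by
      rw [Complex.norm_polarCoord_symm, abs_of_pos hp1]
    rw [mul_one]
    by_cases hmem : r < p.1 ∧ p.1 < 1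
    · rw [Set.indicator_of_mem (show _ ∈ {w : ℂ | r < ‖w‖ ∧ ‖w‖ < 1} by
          rw [Set.mem_setOf_eq, habs]; exact hmem),
        Set.indicator_of_mem (by exact hmem)]
      rw [norm_zpow, habs, smul_eq_mul, ← zpow_natCast, ← zpow_mul,
        show ((b - 1) * (2:ℕ) : ℤ) = (b-1)*2 by push_cast; ring,
        show (2 * b - 1 : ℤ) = 1 + (b - 1) * 2 by ring,
        zpow_add₀ (ne_of_gt hp1), zpow_one]
    · rw [Set.indicator_of_notMem (show _ ∉ {w : ℂ | r < ‖w‖ ∧ ‖w‖ < 1} by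
          rw [Set.mem_setOf_eq, habs]; exact hmem), smul_zero,
        Set.indicator_of_notMem (by simpa [Set.mem_Ioo] using hmem)]
  rw [setIntegral_congr_fun polarCoord.open_target.measurableSet hcongr]
  rw [polarCoord_target, Measure.volume_eq_prod]
  have hsplit : (∫ x : ℝ × ℝ in Set.Ioi (0:ℝ) ×ˢ Set.Ioo (-Real.pi) Real.pi,
        (Set.Ioo r 1).indicator (fun ρ => ρ ^ (2 * b - 1)) x.1 * 1 ∂(volume.prod volume))
      = (∫ x in Set.Ioi (0:ℝ), (Set.Ioo r 1).indicator (fun ρ => ρ ^ (2 * b - 1)) x)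
        * ∫ _ in Set.Ioo (-Real.pi) Real.pi, (1:ℝ) :=
    setIntegral_prod_mul (fun ρ : ℝ => (Set.Ioo r 1).indicator (fun ρ => ρ ^ (2 * b - 1)) ρ)
      (fun _ : ℝ => (1:ℝ)) _ _
  rw [hsplit]
  have h2 : (∫ _ in Set.Ioo (-Real.pi) Real.pi, (1:ℝ)) = 2 * Real.pi := by
    simp [Real.pi_pos.le]
    ring
  have h1 : (∫ x in Set.Ioi (0:ℝ), Set.indicator (Set.Ioo r 1) (fun ρ => ρ ^ (2 * b - 1)) x)
      = ∫ x in Set.Ioo r 1, x ^ (2 * b - 1) := by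
    rw [setIntegral_indicator measurableSet_Ioo]
    congr 1
    rw [Set.inter_eq_self_of_subset_right]
    intro x hx; exact lt_trans hr0 hx.1
  rw [h1, h2]
  have : (∫ x in Set.Ioo r 1, x ^ (2 * b - 1)) = ∫ x in r..1, x ^ (2 * b - 1) := by
    rw [intervalIntegral.integral_of_le hr1.le, integral_Ioc_eq_integral_Ioo]
  rw [this, integral_zpow (by
      right
      constructor
      · omega
      · intro h
        rcases Set.mem_uIcc.mp h with ⟨h0, _⟩ | ⟨_, h0⟩ <;> linarith)]
  have hb2 : (2 * b - 1 + 1) = 2 * b := by ring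
  have hbr : ((2 * b - 1 : ℤ) : ℝ) + 1 = 2 * (b:ℝ) := by push_cast; ring
  rw [hb2, one_zpow, hbr]
  have hbne : (b:ℝ) ≠ 0 := Int.cast_ne_zero.mpr hb
  field_simp


lemma filter_prod_snoc_lt {M : Type*} [CommMonoid M] {n s : ℕ} (hsn : s ≤ n)
    (z : Fin n → M) (w : M) :
    ∏ j ∈ Finset.univ.filter (fun j : Fin (n+1) => (j : ℕ) < s), Fin.snoc z w j
      = ∏ j ∈ Finset.univ.filter (fun j : Fin n => (j : ℕ) < s), z j := by
  rw [Finset.prod_filter, Finset.prod_filter, Fin.prod_univ_castSucc]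
  simp only [Fin.snoc_castSucc, Fin.coe_castSucc, Fin.snoc_last, Fin.val_last]
  rw [if_neg (by omega), mul_one]

lemma filter_prod_snoc_ge {M : Type*} [CommMonoid M] {n s : ℕ} (hsn : s ≤ n)
    (z : Fin n → M) (w : M) :
    ∏ j ∈ Finset.univ.filter (fun j : Fin (n+1) => s ≤ (j : ℕ)), Fin.snoc z w j
      = (∏ j ∈ Finset.univ.filter (fun j : Fin n => s ≤ (j : ℕ)), z j) * w := by
  rw [Finset.prod_filter, Finset.prod_filter, Fin.prod_univ_castSucc]
  simp only [Fin.snoc_castSucc, Fin.coe_castSucc, Fin.snoc_last, Fin.val_last]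
  rw [if_pos hsn]

lemma prod_pow_snoc {n : ℕ} (z : Fin n → ℂ) (w : ℂ) (β : Fin n → ℤ) (b : ℤ) :
    ∏ j : Fin (n+1), (Fin.snoc z w j) ^ ((Fin.snoc β b : Fin (n+1) → ℤ) j - 1)
      = (∏ j, z j ^ (β j - 1)) * w ^ (b - 1) := by
  rw [Fin.prod_univ_castSucc]
  simp [Fin.snoc_castSucc, Fin.snoc_last]

lemma snoc_mem_modelDomain {n s : ℕ} (hsn : s ≤ n) (z : Fin n → ℂ) (w : ℂ) :
    (Fin.snoc z w ∈ modelDomain (n+1) s) ↔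
      ((∀ j, ‖(z j)‖ < 1) ∧
        (‖(∏ j ∈ Finset.univ.filter (fun j : Fin n => (j : ℕ) < s), z j)‖
          < ‖(∏ j ∈ Finset.univ.filter (fun j : Fin n => s ≤ (j : ℕ)), z j)‖
            * ‖w‖ ∧ ‖w‖ < 1)) := by
  unfold modelDomain
  rw [Set.mem_setOf_eq, filter_prod_snoc_lt hsn, filter_prod_snoc_ge hsn, norm_mul]
  constructor
  · rintro ⟨h1, h2⟩
    exact ⟨fun j => by simpa using h1 j.castSucc, h2, by simpa using h1 (Fin.last n)⟩
  · rintro ⟨h1, h2, h3⟩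
    refine ⟨fun j => Fin.lastCases ?_ ?_ j, h2⟩
    · simpa using h3
    · intro i; simpa using h1 i

lemma key_alg {n s : ℕ} (b : ℤ) (β βstar : Fin n → ℤ)
    (hstar : ∀ j : Fin n, βstar j = if (j : ℕ) < s then β j + b else β j - b)
    (z : Fin n → ℂ) (hz : ∀ j, z j ≠ 0) :
    (‖(∏ j, (z j) ^ (β j - 1))‖) ^ 2 *
      ((‖(∏ j ∈ Finset.univ.filter (fun j : Fin n => (j : ℕ) < s), z j)‖ /
        ‖(∏ j ∈ Finset.univ.filter (fun j : Fin n => s ≤ (j : ℕ)), z j)‖) ^ (2 * b))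
      = (‖(∏ j, (z j) ^ (βstar j - 1))‖) ^ 2 := by
  have hu : ∀ j, ‖(z j)‖ ≠ 0 := fun j => norm_ne_zero_iff.mpr (hz j)
  have habs : ∀ (γ : Fin n → ℤ), (‖(∏ j, (z j) ^ (γ j - 1))‖) ^ 2
      = ∏ j, ‖(z j)‖ ^ (2 * γ j - 2) := by
    intro γ
    rw [norm_prod, ← Finset.prod_pow]
    refine Finset.prod_congr rfl fun j _ => ?_
    rw [norm_zpow, ← zpow_natCast (‖(z j)‖ ^ (γ j - 1)) 2, ← zpow_mul]
    congr 1
    push_cast; ring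
  have hfilt : Finset.univ.filter (fun j : Fin n => s ≤ (j : ℕ))
      = Finset.univ.filter (fun j : Fin n => ¬ (j : ℕ) < s) := by
    ext j; simp [not_lt]
  have e1 : (∏ j ∈ Finset.univ.filter (fun j : Fin n => (j : ℕ) < s),
        ‖(z j)‖ ^ (2 * β j - 2))
      * (∏ j ∈ Finset.univ.filter (fun j : Fin n => (j : ℕ) < s), ‖(z j)‖ ^ (2 * b))
      = ∏ j ∈ Finset.univ.filter (fun j : Fin n => (j : ℕ) < s),
        ‖(z j)‖ ^ (2 * βstar j - 2) := by
    rw [← Finset.prod_mul_distrib]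
    refine Finset.prod_congr rfl fun j hj => ?_
    rw [← zpow_add₀ (hu j)]
    congr 1
    rw [hstar j, if_pos (Finset.mem_filter.mp hj).2]
    ring
  have e2 : (∏ j ∈ Finset.univ.filter (fun j : Fin n => ¬ (j : ℕ) < s),
        ‖(z j)‖ ^ (2 * β j - 2))
      = (∏ j ∈ Finset.univ.filter (fun j : Fin n => ¬ (j : ℕ) < s),
          ‖(z j)‖ ^ (2 * βstar j - 2))
        * ∏ j ∈ Finset.univ.filter (fun j : Fin n => ¬ (j : ℕ) < s),
            ‖(z j)‖ ^ (2 * b) := by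
    rw [← Finset.prod_mul_distrib]
    refine Finset.prod_congr rfl fun j hj => ?_
    rw [← zpow_add₀ (hu j)]
    congr 1
    rw [hstar j, if_neg (Finset.mem_filter.mp hj).2]
    ring
  have hQ2 : (∏ j ∈ Finset.univ.filter (fun j : Fin n => ¬ (j : ℕ) < s),
      ‖(z j)‖ ^ (2 * b)) ≠ 0 :=
    Finset.prod_ne_zero_iff.mpr fun j _ => zpow_ne_zero _ (hu j)
  have hmul : (‖(∏ j, (z j) ^ (β j - 1))‖) ^ 2 *
        (‖(∏ j ∈ Finset.univ.filter (fun j : Fin n => (j : ℕ) < s), z j)‖) ^ (2 * b)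
      = (‖(∏ j, (z j) ^ (βstar j - 1))‖) ^ 2 *
        (‖(∏ j ∈ Finset.univ.filter (fun j : Fin n => s ≤ (j : ℕ)), z j)‖) ^ (2 * b) := by
    rw [habs, habs, norm_prod, norm_prod, hfilt, ← Finset.prod_zpow, ← Finset.prod_zpow,
      ← Finset.prod_filter_mul_prod_filter_not Finset.univ (fun j : Fin n => (j : ℕ) < s)
        (fun j => ‖(z j)‖ ^ (2 * β j - 2)),
      ← Finset.prod_filter_mul_prod_filter_not Finset.univ (fun j : Fin n => (j : ℕ) < s)
        (fun j => ‖(z j)‖ ^ (2 * βstar j - 2)),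
      ← e1, e2]
    ring
  have hBne : (‖(∏ j ∈ Finset.univ.filter (fun j : Fin n => s ≤ (j : ℕ)), z j)‖)
      ^ (2 * b) ≠ 0 :=
    zpow_ne_zero _ (norm_ne_zero_iff.mpr
      (Finset.prod_ne_zero_iff.mpr fun j _ => hz j))
  rw [div_zpow, div_eq_mul_inv, ← mul_assoc, hmul, mul_assoc, mul_inv_cancel₀ hBne, mul_one]

lemma fiber_eq {n s : ℕ} (hsn : s ≤ n) (b : ℤ) (hb : b ≠ 0) (β βstar : Fin n → ℤ)
    (hstar : ∀ j : Fin n, βstar j = if (j : ℕ) < s then β j + b else β j - b)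
    (z : Fin n → ℂ) (hz : ∀ j, z j ≠ 0) :
    (∫ w : ℂ, Set.indicator (modelDomain (n+1) s)
        (fun y : Fin (n+1) → ℂ =>
          (‖(∏ j, (y j) ^ ((Fin.snoc β b : Fin (n+1) → ℤ) j - 1))‖) ^ 2)
        (Fin.snoc z w))
    = (Real.pi / b) *
      (Set.indicator (modelDomain n s)
          (fun z : Fin n → ℂ => (‖(∏ j, (z j) ^ (β j - 1))‖) ^ 2) z
       - Set.indicator (modelDomain n s)
          (fun z : Fin n → ℂ => (‖(∏ j, (z j) ^ (βstar j - 1))‖) ^ 2) z) := by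
  set A := ‖(∏ j ∈ Finset.univ.filter (fun j : Fin n => (j : ℕ) < s), z j)‖ with hA
  set B := ‖(∏ j ∈ Finset.univ.filter (fun j : Fin n => s ≤ (j : ℕ)), z j)‖ with hB
  have hA0 : 0 < A :=
    norm_pos_iff.mpr (Finset.prod_ne_zero_iff.mpr fun j _ => hz j)
  have hB0 : 0 < B :=
    norm_pos_iff.mpr (Finset.prod_ne_zero_iff.mpr fun j _ => hz j)
  by_cases hz1 : ∀ j, ‖(z j)‖ < 1
  · -- all coordinates in the disc
    set C := (‖(∏ j, (z j) ^ (β j - 1))‖) ^ 2 with hC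
    have hptw : ∀ w : ℂ, Set.indicator (modelDomain (n+1) s)
        (fun y : Fin (n+1) → ℂ =>
          (‖(∏ j, (y j) ^ ((Fin.snoc β b : Fin (n+1) → ℤ) j - 1))‖) ^ 2)
        (Fin.snoc z w)
        = Set.indicator {w : ℂ | A / B < ‖w‖ ∧ ‖w‖ < 1}
            (fun w => C * (‖(w ^ (b - 1))‖) ^ 2) w := by
      intro w
      by_cases hw : A / B < ‖w‖ ∧ ‖w‖ < 1
      · rw [Set.indicator_of_mem (show w ∈ {w : ℂ | A / B < ‖w‖ ∧ ‖w‖ < 1} from hw), Set.indicator_of_mem]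
        · rw [prod_pow_snoc, norm_mul, mul_pow]
        · rw [snoc_mem_modelDomain hsn]
          refine ⟨hz1, ?_, hw.2⟩
          rw [← hA, ← hB]
          calc A = A / B * B := by field_simp
          _ < ‖w‖ * B := by
                exact mul_lt_mul_of_pos_right hw.1 hB0
          _ = B * ‖w‖ := mul_comm _ _
      · rw [Set.indicator_of_notMem (show w ∉ {w : ℂ | A / B < ‖w‖ ∧ ‖w‖ < 1} from hw), Set.indicator_of_notMem]
        rw [snoc_mem_modelDomain hsn]
        rintro ⟨-, hlt, hw1⟩
        rw [← hA, ← hB] at hlt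
        exact hw ⟨(div_lt_iff₀ hB0).mpr (by linarith [mul_comm B (‖w‖)] ), hw1⟩
    simp_rw [hptw]
    rw [integral_indicator (annulus_open (A/B)).measurableSet, integral_const_mul]
    by_cases hr : A < B
    · have hr1 : A / B < 1 := (div_lt_one hB0).mpr hr
      have hr0 : 0 < A / B := div_pos hA0 hB0
      rw [annulus_int b hb (A/B) hr0 hr1]
      have hmem : z ∈ modelDomain n s := ⟨hz1, hr⟩
      rw [Set.indicator_of_mem hmem, Set.indicator_of_mem hmem, ← hC,
        ← key_alg (s := s) b β βstar hstar z hz, ← hA, ← hB, ← hC]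
      field_simp
    · have hempty : {w : ℂ | A / B < ‖w‖ ∧ ‖w‖ < 1} = ∅ := by
        ext w
        simp only [Set.mem_setOf_eq, Set.mem_empty_iff_false, iff_false, not_and]
        intro hlt
        have h1 : (1:ℝ) ≤ A / B := (one_le_div hB0).mpr (not_lt.mp hr)
        linarith
      rw [hempty]
      have hnot : z ∉ modelDomain n s := fun h => hr h.2
      rw [Set.indicator_of_notMem hnot, Set.indicator_of_notMem hnot]
      simp
  · -- some coordinate out of the disc
    have hnot : z ∉ modelDomain n s := fun h => hz1 h.1
    have hv : ∀ w : ℂ, Fin.snoc z w ∉ modelDomain (n+1) s := fun w h =>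
      hz1 ((snoc_mem_modelDomain hsn z w).mp h).1
    rw [Set.indicator_of_notMem hnot, Set.indicator_of_notMem hnot]
    simp only [sub_zero, mul_zero, sub_self]
    rw [show (∫ w : ℂ, Set.indicator (modelDomain (n+1) s)
        (fun y : Fin (n+1) → ℂ =>
          (‖(∏ j, (y j) ^ ((Fin.snoc β b : Fin (n+1) → ℤ) j - 1))‖) ^ 2)
        (Fin.snoc z w)) = ∫ _ : ℂ, (0:ℝ) from
      integral_congr_ae (Filter.Eventually.of_forall fun w =>
        Set.indicator_of_notMem (hv w) _)]
    simp

/-- the recursion for `𝒟_{n,s}`. -/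
theorem stmt_7 (n s : ℕ) (hs : 1 ≤ s) (hsn : s ≤ n - 1)
    (β : Fin n → ℤ) (b : ℤ) (hb : b ≠ 0)
    (βstar : Fin n → ℤ)
    (hstar : ∀ j : Fin n, βstar j = if (j : ℕ) < s then β j + b else β j - b)
    (h1 : IntegrableOn (fun z : Fin n → ℂ =>
      (‖(∏ j, (z j) ^ (β j - 1))‖) ^ 2) (modelDomain n s))
    (h2 : IntegrableOn (fun z : Fin n → ℂ =>
      (‖(∏ j, (z j) ^ (βstar j - 1))‖) ^ 2) (modelDomain n s))
    (h3 : IntegrableOn (fun z : Fin (n + 1) → ℂ =>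
      (‖(∏ j, (z j) ^ ((Fin.snoc β b : Fin (n + 1) → ℤ) j - 1))‖) ^ 2) (modelDomain (n + 1) s)) :
    Dcal (n + 1) s (Fin.snoc β b : Fin (n + 1) → ℤ) = (1 / (b : ℝ)) * (Dcal n s β - Dcal n s βstar) := by
  have hsn' : s ≤ n := by omega
  set F : (Fin (n+1) → ℂ) → ℝ := fun z =>
    (‖(∏ j, (z j) ^ ((Fin.snoc β b : Fin (n + 1) → ℤ) j - 1))‖) ^ 2 with hF
  set f : (Fin n → ℂ) → ℝ := fun z => (‖(∏ j, (z j) ^ (β j - 1))‖) ^ 2 with hf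
  set g : (Fin n → ℂ) → ℝ := fun z => (‖(∏ j, (z j) ^ (βstar j - 1))‖) ^ 2 with hg
  have hmeas1 : MeasurableSet (modelDomain (n+1) s) := (isOpen_modelDomain _ _).measurableSet
  have hmeas0 : MeasurableSet (modelDomain n s) := (isOpen_modelDomain _ _).measurableSet
  -- the measurable equivalence
  set e := MeasurableEquiv.piFinSuccAbove (fun _ : Fin (n+1) => ℂ) (Fin.last n) with he
  have hpres : MeasurePreserving e volume volume :=
    volume_preserving_piFinSuccAbove (fun _ : Fin (n+1) => ℂ) (Fin.last n)
  have hsymm : ∀ p : ℂ × (Fin n → ℂ), e.symm p = Fin.snoc p.2 p.1 := by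
    intro p
    simp [he, MeasurableEquiv.piFinSuccAbove_symm_apply, Fin.insertNth_last', Fin.snocEquiv]
  -- step 1 : rewrite the set integral as an integral of an indicator over the product space
  have hind : Integrable (Set.indicator (modelDomain (n+1) s) F) volume :=
    (integrable_indicator_iff hmeas1).mpr h3
  have hcomp : (∫ p : ℂ × (Fin n → ℂ), Set.indicator (modelDomain (n+1) s) F (e.symm p))
      = ∫ z, Set.indicator (modelDomain (n+1) s) F z :=
    (hpres.symm).integral_comp e.symm.measurableEmbedding _
  have hint2 : Integrable (fun p : ℂ × (Fin n → ℂ) =>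
      Set.indicator (modelDomain (n+1) s) F (e.symm p)) volume :=
    ((hpres.symm).integrable_comp_emb e.symm.measurableEmbedding).mpr hind
  rw [Measure.volume_eq_prod] at hint2
  have hfub : (∫ p : ℂ × (Fin n → ℂ), Set.indicator (modelDomain (n+1) s) F (e.symm p))
      = ∫ z' : Fin n → ℂ, ∫ w : ℂ,
          Set.indicator (modelDomain (n+1) s) F (Fin.snoc z' w) := by
    rw [Measure.volume_eq_prod, integral_prod_symm _ hint2]
    congr 1
    ext z'
    congr 1
    ext w
    rw [hsymm (w, z')]
  have hae : ∀ᵐ z : Fin n → ℂ, ∀ j, z j ≠ 0 := by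
    rw [ae_all_iff]
    intro j
    exact MeasureTheory.Measure.ae_eval_ne (fun _ : Fin n => (volume : Measure ℂ)) j 0
  have hinner : (∫ z' : Fin n → ℂ, ∫ w : ℂ,
        Set.indicator (modelDomain (n+1) s) F (Fin.snoc z' w))
      = ∫ z' : Fin n → ℂ, (Real.pi / b) *
          (Set.indicator (modelDomain n s) f z' - Set.indicator (modelDomain n s) g z') := by
    apply integral_congr_ae
    filter_upwards [hae] with z' hz'
    exact fiber_eq hsn' b hb β βstar hstar z' hz'
  have hsub : (∫ z' : Fin n → ℂ, (Real.pi / b) *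
        (Set.indicator (modelDomain n s) f z' - Set.indicator (modelDomain n s) g z'))
      = (Real.pi / b) * ((∫ z in modelDomain n s, f z) - ∫ z in modelDomain n s, g z) := by
    rw [integral_const_mul, integral_sub ((integrable_indicator_iff hmeas0).mpr h1)
      ((integrable_indicator_iff hmeas0).mpr h2),
      integral_indicator hmeas0, integral_indicator hmeas0]
  have hmain : (∫ z in modelDomain (n+1) s, F z)
      = (Real.pi / b) * ((∫ z in modelDomain n s, f z) - ∫ z in modelDomain n s, g z) := by
    rw [← integral_indicator hmeas1, ← hcomp, hfub, hinner, hsub]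
  unfold Dcal
  rw [hmain]
  show (1 / Real.pi ^ (n+1)) * (Real.pi / b *
      ((∫ z in modelDomain n s, f z) - ∫ z in modelDomain n s, g z))
    = (1 / (b:ℝ)) * ((1 / Real.pi ^ n) * (∫ z in modelDomain n s, f z)
        - (1 / Real.pi ^ n) * ∫ z in modelDomain n s, g z)
  have hπ : (Real.pi : ℝ) ≠ 0 := Real.pi_ne_zero
  have hbne : (b : ℝ) ≠ 0 := Int.cast_ne_zero.mpr hb
  generalize (∫ z in modelDomain n s, f z) = I1
  generalize (∫ z in modelDomain n s, g z) = I2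
  rw [pow_succ]
  field_simp
end

section
/- Define polynomials R_{n,s} in variables β_1,...,β_n recursively by R_{s,s} = 1 and R_{n+1,s}(β, β_{n+1}) = (1/β_{n+1}) ( R_{n,s}(β) ∏_{j=1}^s (β_j + β_{n+1}) − R_{n,s}(β*) ∏_{j=1}^s β_j ), where β*_j = β_j + β_{n+1} for 1 ≤ j ≤ s and β*_j = β_j − β_{n+1} for s+1 ≤ j ≤ n. Then R_{n,s} is a homogeneous polynomial with integer coefficients of total degree (n−s)(s−1) for all n ≥ s. -/
open MvPolynomial

set_option maxHeartbeats 1000000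

/-- The right-hand side of the recursion. -/
noncomputable def rhsR (s n : ℕ) (p : MvPolynomial (Fin n) ℤ) : MvPolynomial (Fin (n + 1)) ℤ :=
  rename Fin.castSucc p *
      (∏ j ∈ Finset.univ.filter (fun j : Fin (n + 1) => (j : ℕ) < s),
        (X j + X (Fin.last n))) -
    (aeval (fun j : Fin n =>
        if (j : ℕ) < s then X j.castSucc + X (Fin.last n)
        else X j.castSucc - X (Fin.last n))) p *
      (∏ j ∈ Finset.univ.filter (fun j : Fin (n + 1) => (j : ℕ) < s), X j)

lemma aeval_X_castSucc {n : ℕ} (q : MvPolynomial (Fin n) ℤ) :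
    aeval (fun j : Fin n => (X j.castSucc : MvPolynomial (Fin (n + 1)) ℤ)) q =
      rename Fin.castSucc q := by
  induction q using MvPolynomial.induction_on with
  | C a => simp only [aeval_C, algebraMap_int_eq, eq_intCast, rename_C, map_intCast]
  | add p q hp hq => rw [map_add, map_add, hp, hq]
  | mul_X p j hp => rw [map_mul, map_mul, aeval_X, rename_X, hp]

lemma aeval_fix_rename {n : ℕ} (g : Fin (n + 1) → MvPolynomial (Fin (n + 1)) ℤ)
    (hgc : ∀ j : Fin n, g j.castSucc = X j.castSucc) (q : MvPolynomial (Fin n) ℤ) :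
    aeval g (rename Fin.castSucc q) = rename Fin.castSucc q := by
  induction q using MvPolynomial.induction_on with
  | C a => simp
  | add p q hp hq => rw [map_add, map_add, hp, hq]
  | mul_X p j hp => rw [map_mul, map_mul, rename_X, aeval_X, hgc, hp]

lemma aeval_aeval_int {a b : ℕ} (f : Fin a → MvPolynomial (Fin b) ℤ)
    (g : Fin b → MvPolynomial (Fin b) ℤ) (p : MvPolynomial (Fin a) ℤ) :
    aeval g (aeval f p) = aeval (fun j => aeval g (f j)) p := by
  induction p using MvPolynomial.induction_on with
  | C a => simp
  | add p q hp hq => rw [map_add, map_add, map_add, hp, hq]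
  | mul_X p j hp => rw [map_mul, map_mul, map_mul, aeval_X, aeval_X, hp]

lemma X_dvd_sub_aeval {N : ℕ} (i : Fin N) (P : MvPolynomial (Fin N) ℤ) :
    X i ∣ P - aeval (fun j : Fin N => if j = i then 0 else X j) P := by
  induction P using MvPolynomial.induction_on with
  | C a => simp
  | add p q hp hq =>
      have : p + q - aeval (fun j : Fin N => if j = i then 0 else X j) (p + q) =
          (p - aeval (fun j : Fin N => if j = i then 0 else X j) p) +
          (q - aeval (fun j : Fin N => if j = i then 0 else X j) q) := by
        rw [map_add]; ring
      rw [this]; exact dvd_add hp hq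
  | mul_X p j hp =>
      rw [map_mul, aeval_X]
      by_cases hj : j = i
      · subst hj
        rw [if_pos rfl, mul_zero, sub_zero]
        exact dvd_mul_left _ _
      · rw [if_neg hj]
        have : p * X j - aeval (fun j : Fin N => if j = i then 0 else X j) p * X j =
            (p - aeval (fun j : Fin N => if j = i then 0 else X j) p) * X j := by ring
        rw [this]
        exact (hp).mul_right _

lemma X_dvd_of_aeval_eq_zero {N : ℕ} (i : Fin N) (P : MvPolynomial (Fin N) ℤ)
    (h : aeval (fun j : Fin N => if j = i then (0 : MvPolynomial (Fin N) ℤ) else X j) P = 0) :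
    X i ∣ P := by
  have := X_dvd_sub_aeval i P
  rwa [h, sub_zero] at this

lemma X_dvd_rhsR (s n : ℕ) (p : MvPolynomial (Fin n) ℤ) :
    X (Fin.last n) ∣ rhsR s n p := by
  set g : Fin (n + 1) → MvPolynomial (Fin (n + 1)) ℤ :=
    fun j => if j = Fin.last n then 0 else X j with hg
  apply X_dvd_of_aeval_eq_zero (Fin.last n)
  have hglast : g (Fin.last n) = 0 := by simp [hg]
  have hgc : ∀ j : Fin n, g j.castSucc = X j.castSucc := fun j => by
    simp only [hg, if_neg (Fin.castSucc_lt_last j).ne]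
  have hren : ∀ q : MvPolynomial (Fin n) ℤ,
      aeval g (rename Fin.castSucc q) = rename Fin.castSucc q :=
    aeval_fix_rename g hgc
  have hcomp : aeval g (((aeval (fun j : Fin n =>
      if (j : ℕ) < s then X j.castSucc + X (Fin.last n)
      else X j.castSucc - X (Fin.last n))) p : MvPolynomial (Fin (n + 1)) ℤ)) =
      rename Fin.castSucc p := by
    rw [aeval_aeval_int]
    have hfun : ∀ j : Fin n, aeval g
        ((if (j : ℕ) < s then X j.castSucc + X (Fin.last n)
          else X j.castSucc - X (Fin.last n)) : MvPolynomial (Fin (n + 1)) ℤ) =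
        X j.castSucc := by
      intro j
      by_cases hj : (j : ℕ) < s <;>
        simp [hj, hglast, hgc]
    simp only [hfun]
    exact aeval_X_castSucc p
  have hprod : aeval g (∏ j ∈ Finset.univ.filter (fun j : Fin (n + 1) => (j : ℕ) < s),
      ((X j : MvPolynomial (Fin (n + 1)) ℤ) + X (Fin.last n))) =
      aeval g (∏ j ∈ Finset.univ.filter (fun j : Fin (n + 1) => (j : ℕ) < s),
        (X j : MvPolynomial (Fin (n + 1)) ℤ)) := by
    rw [map_prod, map_prod]
    refine Finset.prod_congr rfl fun j _ => ?_
    rw [map_add, aeval_X, aeval_X, hglast]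
    simp [hg]
  rw [rhsR, map_sub, map_mul, map_mul, hren, hcomp, hprod]
  ring

/-- The recursively defined polynomials. -/
noncomputable def Rpoly (s : ℕ) : (n : ℕ) → MvPolynomial (Fin n) ℤ
  | 0 => if 0 = s then 1 else 0
  | (n + 1) =>
      if n + 1 = s then 1 else (X_dvd_rhsR s n (Rpoly s n)).choose

lemma Rpoly_self (s : ℕ) : Rpoly s s = 1 := by
  cases s with
  | zero => simp [Rpoly]
  | succ t => simp [Rpoly]

lemma Rpoly_succ (s n : ℕ) (h : s ≤ n) :
    X (Fin.last n) * Rpoly s (n + 1) = rhsR s n (Rpoly s n) := by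
  have hne : ¬(n + 1 = s) := by omega
  rw [show Rpoly s (n + 1) = (X_dvd_rhsR s n (Rpoly s n)).choose from by
    simp [Rpoly, hne]]
  exact (X_dvd_rhsR s n (Rpoly s n)).choose_spec.symm

lemma card_filter_lt (N s : ℕ) (h : s ≤ N) :
    (Finset.univ.filter (fun j : Fin N => (j : ℕ) < s)).card = s := by
  have : Finset.univ.filter (fun j : Fin N => (j : ℕ) < s) =
      Finset.map (Fin.castLEEmb h) Finset.univ := by
    ext j
    simp only [Finset.mem_filter, Finset.mem_univ, true_and, Finset.mem_map]
    constructor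
    · intro hj
      exact ⟨⟨(j : ℕ), hj⟩, by simp [Fin.castLEEmb, Fin.ext_iff]⟩
    · rintro ⟨k, rfl⟩
      simp [k.isLt]
  rw [this, Finset.card_map, Finset.card_univ, Fintype.card_fin]

lemma isHomogeneous_of_X_mul {N : ℕ} {i : Fin N} {Q : MvPolynomial (Fin N) ℤ} {d : ℕ}
    (h : (X i * Q).IsHomogeneous d) : Q.IsHomogeneous (d - 1) := by
  intro e he
  have hc : coeff (Finsupp.single i 1 + e) (X i * Q) ≠ 0 := by
    rwa [coeff_X_mul]
  have h1 := h hc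
  rw [map_add] at h1
  have h2 : (Finsupp.weight 1) (Finsupp.single i (1 : ℕ)) = 1 := by
    simp [Finsupp.weight_apply, Finsupp.sum_single_index]
  rw [h2] at h1
  omega

lemma rhsR_isHomogeneous (s n : ℕ) (h : s ≤ n) {d : ℕ}
    {p : MvPolynomial (Fin n) ℤ} (hp : p.IsHomogeneous d) :
    (rhsR s n p).IsHomogeneous (d + s) := by
  have hcard := card_filter_lt (n + 1) s (by omega)
  have hprod1 : (∏ j ∈ Finset.univ.filter (fun j : Fin (n + 1) => (j : ℕ) < s),
      ((X j : MvPolynomial (Fin (n + 1)) ℤ) + X (Fin.last n))).IsHomogeneous s := by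
    have := MvPolynomial.IsHomogeneous.prod
      (Finset.univ.filter (fun j : Fin (n + 1) => (j : ℕ) < s))
      (fun j => (X j : MvPolynomial (Fin (n + 1)) ℤ) + X (Fin.last n)) (fun _ => 1)
      (fun j _ => (isHomogeneous_X _ _).add (isHomogeneous_X _ _))
    simpa only [Finset.sum_const, smul_eq_mul, mul_one, hcard] using this
  have hprod2 : (∏ j ∈ Finset.univ.filter (fun j : Fin (n + 1) => (j : ℕ) < s),
      (X j : MvPolynomial (Fin (n + 1)) ℤ)).IsHomogeneous s := by
    have := MvPolynomial.IsHomogeneous.prod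
      (Finset.univ.filter (fun j : Fin (n + 1) => (j : ℕ) < s))
      (fun j => (X j : MvPolynomial (Fin (n + 1)) ℤ)) (fun _ => 1)
      (fun j _ => isHomogeneous_X _ _)
    simpa only [Finset.sum_const, smul_eq_mul, mul_one, hcard] using this
  have h1 : (rename (Fin.castSucc (n := n)) p).IsHomogeneous d := hp.rename_isHomogeneous
  have h2 : (((aeval (fun j : Fin n =>
      if (j : ℕ) < s then X j.castSucc + X (Fin.last n)
      else X j.castSucc - X (Fin.last n))) p : MvPolynomial (Fin (n + 1)) ℤ)).IsHomogeneous d := by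
    have hg1 : ∀ i : Fin n,
        ((if (i : ℕ) < s then X i.castSucc + X (Fin.last n)
          else X i.castSucc - X (Fin.last n)) : MvPolynomial (Fin (n + 1)) ℤ).IsHomogeneous 1 := by
      intro i
      by_cases hi : (i : ℕ) < s
      · simpa [hi] using (isHomogeneous_X _ _).add (isHomogeneous_X _ _)
      · simpa [hi] using (isHomogeneous_X ℤ (i.castSucc : Fin (n + 1))).sub
          (isHomogeneous_X _ _)
    have := hp.aeval (fun j : Fin n =>
        ((if (j : ℕ) < s then X j.castSucc + X (Fin.last n)
          else X j.castSucc - X (Fin.last n)) : MvPolynomial (Fin (n + 1)) ℤ)) hg1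
    simpa using this
  exact (h1.mul hprod1).sub (h2.mul hprod2)

lemma Rpoly_isHomogeneous (s : ℕ) : ∀ m : ℕ,
    (Rpoly s (s + m)).IsHomogeneous (m * (s - 1)) := by
  intro m
  induction m with
  | zero => rw [Nat.add_zero, Rpoly_self]; simpa using isHomogeneous_one _ _
  | succ m ih =>
      have hrec := Rpoly_succ s (s + m) (by omega)
      have hrhs : (rhsR s (s + m) (Rpoly s (s + m))).IsHomogeneous (m * (s - 1) + s) :=
        rhsR_isHomogeneous s (s + m) (by omega) ih
      rw [← hrec] at hrhs
      have := isHomogeneous_of_X_mul hrhs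
      have harith : m * (s - 1) + s - 1 = (m + 1) * (s - 1) := by
        cases s with
        | zero => simp
        | succ t => simp [Nat.succ_sub_one]; ring
      rwa [harith] at this

/-- the recursion
`R_{s,s} = 1`,
`β_{n+1} · R_{n+1,s}(β, β_{n+1}) = R_{n,s}(β) ∏_{j≤s}(β_j + β_{n+1}) − R_{n,s}(β*) ∏_{j≤s} β_j`
is well defined (the right-hand side is divisible by `β_{n+1}` in `ℤ[β]`) and
produces homogeneous integer polynomials of total degree `(n − s)(s − 1)` for all `n ≥ s`. -/
theorem stmt_8 (s : ℕ) :
    ∃ R : (n : ℕ) → MvPolynomial (Fin n) ℤ,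
      R s = 1 ∧
      (∀ m : ℕ,
        X (Fin.last (s + m)) * R (s + m + 1) =
          rename Fin.castSucc (R (s + m)) *
              (∏ j ∈ Finset.univ.filter (fun j : Fin (s + m + 1) => (j : ℕ) < s),
                (X j + X (Fin.last (s + m)))) -
            (aeval (fun j : Fin (s + m) =>
                if (j : ℕ) < s then X j.castSucc + X (Fin.last (s + m))
                else X j.castSucc - X (Fin.last (s + m)))) (R (s + m)) *
              (∏ j ∈ Finset.univ.filter (fun j : Fin (s + m + 1) => (j : ℕ) < s), X j)) ∧
      (∀ n : ℕ, s ≤ n → (R n).IsHomogeneous ((n - s) * (s - 1))) := by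
  refine ⟨Rpoly s, Rpoly_self s, fun m => ?_, fun n hn => ?_⟩
  · exact Rpoly_succ s (s + m) (by omega)
  · obtain ⟨k, rfl⟩ := Nat.exists_eq_add_of_le hn
    rw [Nat.add_sub_cancel_left]
    exact Rpoly_isHomogeneous s k
end

section
/- Let Ω_{n,1} = {z ∈ 𝔻ⁿ : |z_1| < |z_2⋯z_n|}. Its Bergman kernel is B(z,w) = (1/πⁿ) · (∏_{b=2}^n t_b) / ( (∏_{b=2}^n t_b − t_1)² ∏_{b=2}^n (1 − t_b)² ), where t_b = z_b conj(w_b). Equivalently, the series ∑_{α ∈ 𝒮} (α_1+1) ∏_{b=2}^n (α_1+α_b+2) · t^α, over 𝒮 = {α ∈ ℤⁿ : α_1 ≥ 0, α_1+α_ℓ+1 ≥ 0 for 2 ≤ ℓ ≤ n}, converges to πⁿ B(z,w) for z, w ∈ Ω_{n,1}. -/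
open Complex Finset

lemma one_var {𝕜 : Type*} [NormedField 𝕜] [CompleteSpace 𝕜] {x : 𝕜} (hx : ‖x‖ < 1) :
    HasSum (fun k : ℕ => ((k : 𝕜) + 1) * x ^ k) (1 / (1 - x) ^ 2) := by
  have hne : (1 : 𝕜) - x ≠ 0 := by
    intro h
    rw [sub_eq_zero] at h
    simp [← h] at hx
  have h1 := hasSum_coe_mul_geometric_of_norm_lt_one hx
  have h2 := hasSum_geometric_of_norm_lt_one hx
  have h := h1.add h2
  convert h using 1
  · funext k; ring
  · rw [inv_eq_one_div]
    field_simp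
    ring

lemma one_var_norm {x : ℂ} :
    (fun k : ℕ => ‖((k : ℂ) + 1) * x ^ k‖) = fun k : ℕ => ((k : ℝ) + 1) * ‖x‖ ^ k := by
  funext k
  rw [norm_mul, norm_pow]
  congr 1
  have : ((k : ℂ) + 1) = ((k + 1 : ℕ) : ℂ) := by push_cast; ring
  rw [this, Complex.norm_natCast]
  push_cast; ring

lemma aux_pi {m : ℕ} (f : Fin m → ℕ → ℂ) (s : Fin m → ℂ)
    (hn : ∀ i, Summable fun k => ‖f i k‖) (hs : ∀ i, HasSum (f i) (s i)) :
    HasSum (fun v : Fin m → ℕ => ∏ i, f i (v i)) (∏ i, s i) ∧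
      Summable (fun v : Fin m → ℕ => ‖∏ i, f i (v i)‖) := by
  induction m with
  | zero =>
      have h0 : HasSum (fun v : Fin 0 → ℕ => ∏ i, f i (v i)) (∏ i : Fin 0, f i 0) := by
        simpa using hasSum_single (f := fun v : Fin 0 → ℕ => ∏ i, f i (v i))
          (fun _ => 0) (fun b hb => absurd (Subsingleton.elim b _) hb)
      constructor
      · simpa using h0
      · have : (fun v : Fin 0 → ℕ => ‖∏ i, f i (v i)‖) = fun _ => 1 := by
          funext v; simp
        rw [this]
        exact summable_of_finite_support (Set.Finite.subset (Set.finite_univ) (by simp))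
  | succ m ih =>
      obtain ⟨ih1, ih2⟩ := ih (fun i => f i.succ) (fun i => s i.succ)
        (fun i => hn _) (fun i => hs _)
      set G : (Fin m → ℕ) → ℂ := fun v => ∏ i : Fin m, f i.succ (v i) with hG
      have hsum : Summable fun p : ℕ × (Fin m → ℕ) => f 0 p.1 * G p.2 :=
        summable_mul_of_summable_norm (hn 0) ih2
      have hnorm2 : Summable fun p : ℕ × (Fin m → ℕ) => ‖f 0 p.1 * G p.2‖ :=
        (hn 0).mul_norm ih2
      have hval : (∑' p : ℕ × (Fin m → ℕ), f 0 p.1 * G p.2)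
          = s 0 * ∏ i : Fin m, s i.succ := by
        rw [← Summable.tsum_mul_tsum ((hn 0).of_norm) ih1.summable hsum, (hs 0).tsum_eq, ih1.tsum_eq]
      have hmul : HasSum (fun p : ℕ × (Fin m → ℕ) => f 0 p.1 * G p.2)
          (s 0 * ∏ i : Fin m, s i.succ) := hval ▸ hsum.hasSum
      set e := Fin.consEquiv (fun _ : Fin (m + 1) => ℕ)
      have hcomp : (fun v : Fin (m + 1) → ℕ => ∏ i, f i (v i)) ∘ e
          = fun p : ℕ × (Fin m → ℕ) => f 0 p.1 * G p.2 := by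
        funext p
        simp only [Function.comp_apply, e, Fin.consEquiv_apply]
        rw [Fin.prod_univ_succ]
        simp [hG]
      constructor
      · rw [← e.hasSum_iff, hcomp, Fin.prod_univ_succ]
        exact hmul
      · rw [← e.summable_iff]
        have : (fun v : Fin (m + 1) → ℕ => ‖∏ i, f i (v i)‖) ∘ e
            = fun p : ℕ × (Fin m → ℕ) => ‖f 0 p.1 * G p.2‖ := by
          funext p
          simp only [Function.comp_apply]
          exact congrArg norm (congrFun hcomp p)
        rw [this]
        exact hnorm2

def myEquiv (n : ℕ) : (Fin (n + 2) → ℕ) ≃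
    {α : Fin (n + 2) → ℤ // 0 ≤ α 0 ∧ ∀ l : Fin (n + 2), l ≠ 0 → 0 ≤ α 0 + α l + 1} where
  toFun v := ⟨fun j => if j = 0 then (v 0 : ℤ) else (v j : ℤ) - v 0 - 1, by
    constructor
    · simp
    · intro l hl
      simp [hl]
      omega⟩
  invFun α := fun j => if j = 0 then (α.1 0).toNat else (α.1 0 + α.1 j + 1).toNat
  left_inv v := by
    funext j
    by_cases h : j = 0 <;> simp [h] <;> omega
  right_inv α := by
    obtain ⟨a, ha0, ha⟩ := α
    apply Subtype.ext
    funext j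
    by_cases h : j = 0
    · simp [h, ha0]
    · have := ha j h
      simp only [h, if_neg, if_pos rfl, ite_false]
      push_cast
      omega

/-- the Bergman kernel of `Ω_{n,1} = {z ∈ 𝔻ⁿ : |z_1| < |z_2⋯z_n|}`
(dimension `n + 2 ≥ 2`): the Bergman series
`∑_{α ∈ 𝒮} (α_1+1) ∏_{b≥2} (α_1+α_b+2) tᵅ` (with `t_a = z_a conj(w_a)`) converges to
`πⁿ B(z,w) = (∏_{b≥2} t_b) / ((∏_{b≥2} t_b − t_1)² ∏_{b≥2} (1 − t_b)²)`. -/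
theorem stmt_12 (n : ℕ) (z w : Fin (n + 2) → ℂ)
    (hz : (∀ j, ‖z j‖ < 1) ∧
      ‖z 0‖ <
        ‖∏ j ∈ Finset.univ.filter (fun j : Fin (n + 2) => j ≠ 0), z j‖)
    (hw : (∀ j, ‖w j‖ < 1) ∧
      ‖w 0‖ <
        ‖∏ j ∈ Finset.univ.filter (fun j : Fin (n + 2) => j ≠ 0), w j‖)
    (t : Fin (n + 2) → ℂ) (ht : ∀ a, t a = z a * (starRingEnd ℂ) (w a)) :
    HasSum
      (fun α : {α : Fin (n + 2) → ℤ //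
          0 ≤ α 0 ∧ ∀ l : Fin (n + 2), l ≠ 0 → 0 ≤ α 0 + α l + 1} =>
        (((α.1 0 : ℂ) + 1) *
            ∏ b ∈ Finset.univ.filter (fun b : Fin (n + 2) => b ≠ 0),
              ((α.1 0 : ℂ) + (α.1 b : ℂ) + 2)) *
          ∏ j, (t j) ^ (α.1 j))
      ((∏ b ∈ Finset.univ.filter (fun b : Fin (n + 2) => b ≠ 0), t b) /
        (((∏ b ∈ Finset.univ.filter (fun b : Fin (n + 2) => b ≠ 0), t b) - t 0) ^ 2 *
          ∏ b ∈ Finset.univ.filter (fun b : Fin (n + 2) => b ≠ 0), (1 - t b) ^ 2)) := by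
  classical
  set Q : Finset (Fin (n + 2)) := Finset.univ.filter (fun j : Fin (n + 2) => j ≠ 0) with hQ
  set P : ℂ := ∏ b ∈ Q, t b with hPdef
  -- basic nonvanishing facts
  have habsP : ‖P‖ =
      ‖∏ j ∈ Q, z j‖ * ‖∏ j ∈ Q, w j‖ := by
    have : P = (∏ j ∈ Q, z j) * (starRingEnd ℂ) (∏ j ∈ Q, w j) := by
      rw [map_prod, hPdef, ← Finset.prod_mul_distrib]
      exact Finset.prod_congr rfl (fun b _ => ht b)
    rw [this, norm_mul, Complex.norm_conj]
  have habst0 : ‖t 0‖ < ‖P‖ := by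
    rw [habsP, ht 0, norm_mul, Complex.norm_conj]
    exact mul_lt_mul'' hz.2 hw.2 (norm_nonneg _) (norm_nonneg _)
  have hPpos : 0 < ‖P‖ := lt_of_le_of_lt (norm_nonneg _) habst0
  have hP : P ≠ 0 := by
    intro h; rw [h] at hPpos; simp at hPpos
  have hPt0 : P - t 0 ≠ 0 := by
    intro h
    rw [sub_eq_zero] at h
    rw [← h] at habst0
    exact lt_irrefl _ habst0
  have htb : ∀ b ∈ Q, ‖t b‖ < 1 := by
    intro b _
    rw [ht b, norm_mul, Complex.norm_conj]
    calc ‖z b‖ * ‖w b‖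
        ≤ ‖z b‖ * 1 :=
          mul_le_mul_of_nonneg_left (le_of_lt (hw.1 b)) (norm_nonneg _)
      _ < 1 := by rw [mul_one]; exact hz.1 b
  have htne : ∀ b ∈ Q, t b ≠ 0 := fun b hb =>
    Finset.prod_ne_zero_iff.mp hP b hb
  have h1t : ∀ b ∈ Q, (1 : ℂ) - t b ≠ 0 := by
    intro b hb h
    rw [sub_eq_zero] at h
    have := htb b hb
    rw [← h] at this
    simp at this
  have hprodne : (∏ b ∈ Q, (1 - t b) ^ 2) ≠ 0 :=
    Finset.prod_ne_zero_iff.mpr (fun b hb => pow_ne_zero 2 (h1t b hb))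
  -- per-coordinate data
  set r : Fin (n + 2) → ℂ := fun j => if j = 0 then t 0 / P else t j with hr
  have hrlt : ∀ j, ‖r j‖ < 1 := by
    intro j
    by_cases h : j = 0
    · simp only [hr, h, if_pos rfl]
      rw [norm_div, div_lt_one hPpos]
      exact habst0
    · simp only [hr, if_neg h]
      exact htb j (by simp [hQ, h])
  set g : Fin (n + 2) → ℕ → ℂ := fun j k => ((k : ℂ) + 1) * (r j) ^ k with hg
  set s : Fin (n + 2) → ℂ := fun j => 1 / (1 - r j) ^ 2 with hs
  have hsum : ∀ j, HasSum (g j) (s j) := by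
    intro j
    show HasSum (fun k : ℕ => ((k : ℂ) + 1) * r j ^ k) (1 / (1 - r j) ^ 2)
    exact one_var (hrlt j)
  have hnorm : ∀ j, Summable fun k => ‖g j k‖ := by
    intro j
    have h : ‖(‖r j‖)‖ < 1 := by rw [Real.norm_eq_abs, abs_norm]; exact hrlt j
    show Summable fun k : ℕ => ‖((k : ℂ) + 1) * r j ^ k‖
    rw [one_var_norm]
    exact (one_var h).summable
  obtain ⟨H, -⟩ := aux_pi g s hnorm hsum
  have H' := H.div_const P
  -- identify the value
  have hQ0 : (0 : Fin (n + 2)) ∉ Q := by simp [hQ]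
  have hsplit : ∀ f : Fin (n + 2) → ℂ, (∏ j, f j) = f 0 * ∏ j ∈ Q, f j := by
    intro f
    rw [hQ, Finset.filter_ne']
    exact (Finset.mul_prod_erase Finset.univ f (Finset.mem_univ 0)).symm
  have hval : (∏ j, s j) / P =
      P / ((P - t 0) ^ 2 * ∏ b ∈ Q, (1 - t b) ^ 2) := by
    rw [hsplit s]
    have e0 : s 0 = P ^ 2 / (P - t 0) ^ 2 := by
      have h0 : r 0 = t 0 / P := by simp [hr]
      show (1 : ℂ) / (1 - r 0) ^ 2 = _
      rw [h0, show ((1 : ℂ) - t 0 / P) = (P - t 0) / P by field_simp, div_pow, one_div,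
        inv_div]
    have eb : (∏ j ∈ Q, s j) = ∏ b ∈ Q, 1 / (1 - t b) ^ 2 := by
      apply Finset.prod_congr rfl
      intro b hb
      have hb0 : b ≠ 0 := by
        intro h; rw [h] at hb; exact hQ0 hb
      simp [hs, hr, hb0]
    rw [e0, eb, Finset.prod_div_distrib]
    simp only [Finset.prod_const_one]
    field_simp
  rw [← hval]
  -- identify the function via the equivalence
  rw [← (myEquiv n).hasSum_iff]
  convert H' using 1
  · rfl
  funext v
  simp only [Function.comp_apply]
  -- unfold the equivalence
  have hα0 : ((myEquiv n) v).1 0 = (v 0 : ℤ) := by simp [myEquiv]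
  have hαb : ∀ b ∈ Q, ((myEquiv n) v).1 b = (v b : ℤ) - v 0 - 1 := by
    intro b hb
    have hb0 : b ≠ 0 := by intro h; rw [h] at hb; exact hQ0 hb
    simp [myEquiv, hb0]
  -- coefficient
  have hcoef : (∏ b ∈ Q, ((((myEquiv n) v).1 0 : ℂ) + (((myEquiv n) v).1 b : ℂ) + 2))
      = ∏ b ∈ Q, ((v b : ℂ) + 1) := by
    apply Finset.prod_congr rfl
    intro b hb
    rw [hα0, hαb b hb]
    push_cast
    ring
  -- the zpow product
  have hzpow : (∏ j, (t j) ^ (((myEquiv n) v).1 j))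
      = (t 0 ^ (v 0) * ((∏ b ∈ Q, t b ^ (v b)) / P ^ (v 0 + 1))) := by
    rw [hsplit (fun j => (t j) ^ (((myEquiv n) v).1 j))]
    rw [show (t 0) ^ (((myEquiv n) v).1 0) = t 0 ^ (v 0) by rw [hα0, zpow_natCast]]
    congr 1
    have heach : (∏ b ∈ Q, (t b) ^ (((myEquiv n) v).1 b))
        = ∏ b ∈ Q, (t b ^ (v b) / t b ^ (v 0 + 1)) := by
      apply Finset.prod_congr rfl
      intro b hb
      rw [hαb b hb]
      have hbne := htne b hb
      rw [show ((v b : ℤ) - v 0 - 1) = (v b : ℤ) - ((v 0 + 1 : ℕ) : ℤ) by push_cast; ring]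
      rw [zpow_sub₀ hbne, zpow_natCast, zpow_natCast, div_eq_mul_inv]
    rw [heach, Finset.prod_div_distrib, Finset.prod_pow]
  rw [hcoef, hzpow, hα0]
  -- right hand side
  rw [hsplit (fun j => g j (v j))]
  have hg0 : g 0 (v 0) = ((v 0 : ℂ) + 1) * (t 0 / P) ^ (v 0) := by
    simp [hg, hr]
  have hgb : (∏ b ∈ Q, g b (v b)) = (∏ b ∈ Q, ((v b : ℂ) + 1)) * ∏ b ∈ Q, t b ^ (v b) := by
    rw [← Finset.prod_mul_distrib]
    apply Finset.prod_congr rfl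
    intro b hb
    have hb0 : b ≠ 0 := by intro h; rw [h] at hb; exact hQ0 hb
    simp [hg, hr, hb0]
  rw [hg0, hgb]
  push_cast
  rw [div_pow, pow_succ]
  field_simp
end

section
/- Fix n ≥ 3. The function b̂(t) = ∑_{k=1}^∞ (k / ((k+1)^{n−1} − 1)) t^{k−1} is holomorphic on the open unit disc but is not a rational function. -/
open Finset Polynomial FormalMultilinearSeries

section Stmt14Aux

private lemma stmt14_hasFPSOB (b : ℕ → ℂ) (C : ℝ) (hb : ∀ m, ‖b m‖ ≤ C) :
    HasFPowerSeriesOnBall (fun t => ∑' m : ℕ, b m * t ^ m)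
      (FormalMultilinearSeries.ofScalars ℂ b) 0 1 := by
  have hrad : (1 : ENNReal) ≤ (FormalMultilinearSeries.ofScalars ℂ b).radius := by
    have := FormalMultilinearSeries.le_radius_of_bound (ofScalars ℂ b) C (r := 1)
      (fun m => by rw [FormalMultilinearSeries.ofScalars_norm]; simpa using hb m)
    simpa using this
  have h := ((FormalMultilinearSeries.ofScalars ℂ b).hasFPowerSeriesOnBall
      (lt_of_lt_of_le one_pos hrad)).mono one_pos hrad
  have hsum : (FormalMultilinearSeries.ofScalars ℂ b).sum
      = fun t => ∑' m : ℕ, b m * t ^ m := by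
    have := FormalMultilinearSeries.ofScalarsSum_eq_tsum (𝕜 := ℂ) (E := ℂ) b
    simpa [FormalMultilinearSeries.ofScalarsSum, smul_eq_mul] using this
  rwa [hsum] at h

private lemma stmt14_coeff_zero (b : ℕ → ℂ) (C : ℝ) (hb : ∀ m, ‖b m‖ ≤ C)
    (h0 : ∀ t ∈ Metric.ball (0 : ℂ) 1, ∑' m : ℕ, b m * t ^ m = 0) :
    ∀ m, b m = 0 := by
  have h := (stmt14_hasFPSOB b C hb).hasFPowerSeriesAt
  have hev : (fun t => ∑' m : ℕ, b m * t ^ m) =ᶠ[nhds (0:ℂ)] 0 := by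
    filter_upwards [Metric.ball_mem_nhds (0:ℂ) one_pos] with t ht
    exact h0 t ht
  have hz := (h.congr hev).eq_zero
  have := (FormalMultilinearSeries.ofScalars_series_eq_zero ℂ).mp hz
  exact fun m => congrFun this m

private lemma stmt14_nat_le (e k : ℕ) (he : 2 ≤ e) : k + 2 ≤ (k+2)^e := by
  calc k + 2 ≤ (k+2)^2 := by nlinarith
  _ ≤ (k+2)^e := Nat.pow_le_pow_right (by omega) he

private lemma stmt14_den_cast (e k : ℕ) : ((k:ℂ)+2)^e - 1 = (((k+2)^e - 1 : ℕ) : ℂ) := by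
  have h1 : (1:ℕ) ≤ (k+2)^e := Nat.one_le_pow _ _ (by omega)
  push_cast [h1]
  ring

private lemma stmt14_den_ne (e k : ℕ) (he : 2 ≤ e) : ((k:ℂ)+2)^e - 1 ≠ 0 := by
  rw [stmt14_den_cast]
  have h := stmt14_nat_le e k he
  have : (k+2)^e - 1 ≠ 0 := by omega
  exact_mod_cast Nat.cast_ne_zero.mpr this

private lemma stmt14_a_norm (e k : ℕ) (he : 2 ≤ e) :
    ‖((k:ℂ)+1)/(((k:ℂ)+2)^e - 1)‖ ≤ 1 := by
  rw [stmt14_den_cast]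
  have h2 := stmt14_nat_le e k he
  have : ((k:ℂ)+1) = ((k+1 : ℕ) : ℂ) := by push_cast; ring
  rw [this, norm_div]
  simp only [Complex.norm_natCast]
  rw [div_le_one (by exact_mod_cast (by omega : 0 < (k+2)^e - 1))]
  exact_mod_cast (by omega : k + 1 ≤ (k+2)^e - 1)

private lemma stmt14_summable_aux (c : ℕ → ℂ) (C : ℝ) (hc : ∀ m, ‖c m‖ ≤ C) {t : ℂ}
    (ht : ‖t‖ < 1) : Summable (fun m => c m * t ^ m) := by
  refine Summable.of_norm_bounded (g := fun m => C * ‖t‖ ^ m)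
    ((summable_geometric_of_lt_one (norm_nonneg t) ht).mul_left C) (fun m => ?_)
  rw [norm_mul, norm_pow]
  exact mul_le_mul_of_nonneg_right (hc m) (by positivity)

private lemma stmt14_rearrange (a : ℕ → ℂ) (ha : ∀ k, ‖a k‖ ≤ 1) (q p : Polynomial ℂ)
    (t : ℂ) (ht : ‖t‖ < 1) :
    q.eval t * (∑' k : ℕ, a k * t ^ k) - p.eval t
      = ∑' m : ℕ, ((∑ j ∈ range (q.natDegree + 1),
          q.coeff j * (if j ≤ m then a (m - j) else 0)) - p.coeff m) * t ^ m := by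
  have key : ∀ j : ℕ, q.coeff j * t ^ j * (∑' k : ℕ, a k * t ^ k)
      = ∑' m : ℕ, (q.coeff j * (if j ≤ m then a (m - j) else 0)) * t ^ m := by
    intro j
    rw [mul_comm (q.coeff j * t ^ j), ← tsum_mul_right]
    have := Function.Injective.tsum_eq (g := fun k => k + j)
      (f := fun m => (q.coeff j * (if j ≤ m then a (m - j) else 0)) * t ^ m)
      (add_left_injective j) ?_
    · rw [← this]
      refine tsum_congr fun k => ?_
      simp [pow_add]
      ring
    · intro m hm
      simp only [Function.mem_support, ne_eq] at hm
      by_cases h : j ≤ m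
      · exact ⟨m - j, Nat.sub_add_cancel h⟩
      · simp [h] at hm
  have hql : q.eval t * (∑' k : ℕ, a k * t ^ k)
      = ∑' m : ℕ, (∑ j ∈ range (q.natDegree + 1),
          q.coeff j * (if j ≤ m then a (m - j) else 0)) * t ^ m := by
    rw [Polynomial.eval_eq_sum_range, sum_mul]
    simp_rw [key]
    rw [← Summable.tsum_finsetSum]
    · exact tsum_congr fun m => by rw [sum_mul]
    · intro j hj
      refine stmt14_summable_aux _ ‖q.coeff j‖ (fun m => ?_) ht
      by_cases h : j ≤ m
      · simp only [h, if_true, norm_mul]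
        exact mul_le_of_le_one_right (norm_nonneg _) (ha _)
      · simp [h]
  have hpl : p.eval t = ∑' m : ℕ, p.coeff m * t ^ m := by
    rw [tsum_eq_sum (s := range (p.natDegree + 1)) (fun m hm => by
      rw [Polynomial.coeff_eq_zero_of_natDegree_lt (by simpa using hm), zero_mul]),
      Polynomial.eval_eq_sum_range]
  rw [hql, hpl, ← Summable.tsum_sub]
  · exact tsum_congr fun m => by ring
  · refine stmt14_summable_aux _ (∑ j ∈ range (q.natDegree + 1), ‖q.coeff j‖) (fun m => ?_) ht
    refine (norm_sum_le _ _).trans (sum_le_sum fun j hj => ?_)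
    by_cases h : j ≤ m
    · simp only [h, if_true, norm_mul]
      exact mul_le_of_le_one_right (norm_nonneg _) (ha _)
    · simp [h]
  · exact summable_of_ne_finset_zero (s := range (p.natDegree + 1)) (fun m hm => by
      rw [Polynomial.coeff_eq_zero_of_natDegree_lt (by simpa using hm), zero_mul])

private lemma stmt14_final (e : ℕ) (he : 2 ≤ e) (q : Polynomial ℂ) (hq : q ≠ 0) (M0 : ℕ)
    (hrec : ∀ m : ℕ, M0 ≤ m → q.natDegree ≤ m →
      ∑ j ∈ q.support, q.coeff j *
        ((((m - j : ℕ) : ℂ) + 1) / ((((m - j : ℕ) : ℂ) + 2) ^ e - 1)) = 0) :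
    False := by
  classical
  set P : Polynomial ℂ := ∑ j ∈ q.support, C (q.coeff j) *
      ((X - C (j:ℂ) + 1) * ∏ i ∈ q.support.erase j, ((X - C (i:ℂ) + 2)^e - 1)) with hP
  have hPeval : ∀ z : ℂ, P.eval z = ∑ j ∈ q.support, q.coeff j *
      ((z - j + 1) * ∏ i ∈ q.support.erase j, ((z - i + 2)^e - 1)) := by
    intro z
    simp [hP, eval_finset_sum, eval_prod]
  have hProots : ∀ m : ℕ, M0 ≤ m → q.natDegree ≤ m → P.eval (m:ℂ) = 0 := by
    intro m hm hm'
    have hr := hrec m hm hm'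
    have hW : ∀ j ∈ q.support,
        q.coeff j * ((((m - j : ℕ) : ℂ) + 1) / ((((m - j : ℕ) : ℂ) + 2) ^ e - 1))
          * ∏ i ∈ q.support, (((m:ℂ) - i + 2)^e - 1)
        = q.coeff j * (((m:ℂ) - j + 1) *
            ∏ i ∈ q.support.erase j, (((m:ℂ) - i + 2)^e - 1)) := by
      intro j hj
      have hjm : j ≤ m := le_trans (le_natDegree_of_mem_supp j hj) hm'
      have hcast : ((m - j : ℕ) : ℂ) = (m:ℂ) - j := by
        push_cast [hjm]; ring
      rw [← Finset.mul_prod_erase _ _ hj]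
      have hne : (((m:ℂ) - j + 2)^e - 1) ≠ 0 := by
        have := stmt14_den_ne e (m - j) he
        rwa [hcast] at this
      rw [hcast]
      field_simp
    have := Finset.sum_congr rfl hW
    rw [← Finset.sum_mul, hr, zero_mul] at this
    rw [hPeval, ← this]
  have hP0 : P = 0 := by
    refine Polynomial.eq_zero_of_infinite_isRoot P ?_
    have hsub : (Nat.cast '' (Set.Ici (max M0 q.natDegree)) : Set ℂ) ⊆ {x | P.IsRoot x} := by
      rintro x ⟨m, hm, rfl⟩
      exact hProots m (le_trans (le_max_left _ _) hm) (le_trans (le_max_right _ _) hm)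
    exact Set.Infinite.mono hsub ((Set.Ici_infinite _).image (Nat.cast_injective.injOn))
  obtain ⟨ω, hωS, hωmin⟩ := Finset.exists_min_image
    ((Polynomial.nthRoots e (1:ℂ)).toFinset) Complex.re
    ⟨1, by simp [Polynomial.mem_nthRoots (by omega : 0 < e)]⟩
  rw [Multiset.mem_toFinset, Polynomial.mem_nthRoots (by omega : 0 < e)] at hωS
  have hωmin' : ∀ z : ℂ, z ^ e = 1 → ω.re ≤ z.re := by
    intro z hz
    exact hωmin z
      (by rw [Multiset.mem_toFinset, Polynomial.mem_nthRoots (by omega : 0 < e)]; exact hz)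
  have hω1 : ω ≠ 1 := by
    have he0 : e ≠ 0 := by omega
    have hζ := Complex.isPrimitiveRoot_exp e he0
    set ζ := Complex.exp (2 * Real.pi * Complex.I / e)
    have hζe : ζ ^ e = 1 := hζ.pow_eq_one
    have hζ1 : ζ ≠ 1 := hζ.ne_one (by omega)
    have hζn : ‖ζ‖ = 1 := by
      have hpe : ‖ζ‖ ^ e = 1 := by rw [← norm_pow, hζe, norm_one]
      rcases lt_trichotomy ‖ζ‖ 1 with h|h|h
      · have := pow_lt_one₀ (norm_nonneg ζ) h he0; linarith
      · exact h
      · have := one_lt_pow₀ h he0; linarith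
    have hre : ζ.re < 1 := by
      have h1 : ζ.re ≤ 1 := by
        have := Complex.re_le_norm ζ
        rwa [hζn] at this
      rcases lt_or_eq_of_le h1 with h|h
      · exact h
      · exfalso
        have him : ζ.im = 0 := by
          have habs : ‖ζ‖^2 = ζ.re^2 + ζ.im^2 := by
            rw [Complex.sq_norm, Complex.normSq_apply]; ring
          rw [hζn] at habs
          nlinarith [sq_nonneg ζ.im]
        exact hζ1 (Complex.ext (by simpa using h) (by simpa using him))
    intro hcon
    have := hωmin' ζ hζe
    rw [hcon] at this
    simp only [Complex.one_re] at this
    linarith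
  have hshift : ∀ k : ℕ, 1 ≤ k → (ω - k)^e - 1 ≠ 0 := by
    intro k hk hcon
    have : (ω - k)^e = 1 := by linear_combination hcon
    have := hωmin' _ this
    simp only [Complex.sub_re, Complex.natCast_re] at this
    have : (1:ℝ) ≤ k := by exact_mod_cast hk
    linarith
  have hsupp : q.support.Nonempty := Polynomial.nonempty_support_iff.mpr hq
  set j0 := q.support.min' hsupp with hj0
  have hj0mem : j0 ∈ q.support := q.support.min'_mem hsupp
  set z0 : ℂ := ω - 2 + j0 with hz0
  have hterm : ∀ j ∈ q.support, j ≠ j0 →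
      q.coeff j * ((z0 - j + 1) * ∏ i ∈ q.support.erase j, ((z0 - i + 2)^e - 1)) = 0 := by
    intro j hj hne
    have hj0e : j0 ∈ q.support.erase j := Finset.mem_erase.mpr ⟨hne.symm, hj0mem⟩
    have : ((z0 - j0 + 2)^e - 1) = 0 := by
      have : z0 - j0 + 2 = ω := by rw [hz0]; ring
      rw [this, hωS]; ring
    rw [Finset.prod_eq_zero hj0e this]
    ring
  have hPz0 : P.eval z0 = q.coeff j0 *
      ((z0 - j0 + 1) * ∏ i ∈ q.support.erase j0, ((z0 - i + 2)^e - 1)) := by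
    rw [hPeval]
    exact Finset.sum_eq_single_of_mem j0 hj0mem (fun j hj hne => hterm j hj hne)
  have hne : P.eval z0 ≠ 0 := by
    rw [hPz0]
    refine mul_ne_zero (Polynomial.mem_support_iff.mp hj0mem) (mul_ne_zero ?_ ?_)
    · have : z0 - j0 + 1 = ω - 1 := by rw [hz0]; ring
      rw [this]
      exact sub_ne_zero.mpr hω1
    · rw [Finset.prod_ne_zero_iff]
      intro i hi
      have hii : i ∈ q.support := Finset.mem_of_mem_erase hi
      have hij : j0 ≤ i := q.support.min'_le i hii
      have hij' : j0 ≠ i := fun h => (Finset.mem_erase.mp hi).1 h.symm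
      have h1 : 1 ≤ i - j0 := by omega
      have hcast : z0 - i + 2 = ω - ((i - j0 : ℕ) : ℂ) := by
        rw [hz0]
        push_cast [hij]
        ring
      rw [hcast]
      exact hshift (i - j0) h1
  rw [hP0] at hne
  simp at hne

end Stmt14Aux

/-- for `n ≥ 3`, the function
`b̂(t) = ∑_{k≥1} (k/((k+1)^{n−1} − 1)) t^{k−1}` is holomorphic on the open unit
disc but is not a rational function (it does not agree on the disc with any
quotient of polynomials). -/
theorem stmt_14 (n : ℕ) (hn : 3 ≤ n)
    (f : ℂ → ℂ)
    (hf : ∀ t : ℂ, f t = ∑' k : ℕ, (((k : ℂ) + 1) / (((k : ℂ) + 2) ^ (n - 1) - 1)) * t ^ k) :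
    DifferentiableOn ℂ f (Metric.ball (0 : ℂ) 1) ∧
    ¬∃ p q : Polynomial ℂ, q ≠ 0 ∧
      ∀ t ∈ Metric.ball (0 : ℂ) 1, q.eval t * f t = p.eval t := by
  have he : 2 ≤ n - 1 := by omega
  set a : ℕ → ℂ := fun k => ((k : ℂ) + 1) / (((k : ℂ) + 2) ^ (n - 1) - 1) with ha
  have hanorm : ∀ k, ‖a k‖ ≤ 1 := fun k => stmt14_a_norm (n-1) k he
  have hfe : f = fun t => ∑' k : ℕ, a k * t ^ k := funext hf
  constructor
  · have h := stmt14_hasFPSOB a 1 hanorm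
    rw [← hfe] at h
    intro t ht
    have hmem : t ∈ Metric.eball (0:ℂ) 1 := by
      rw [Metric.mem_eball, edist_dist]
      exact ENNReal.ofReal_lt_one.mpr (Metric.mem_ball.mp ht)
    exact ((h.analyticAt_of_mem hmem).differentiableAt).differentiableWithinAt
  · rintro ⟨p, q, hq, hpq⟩
    set b : ℕ → ℂ := fun m => (∑ j ∈ range (q.natDegree + 1),
        q.coeff j * (if j ≤ m then a (m - j) else 0)) - p.coeff m with hb
    have hbbound : ∀ m, ‖b m‖ ≤ (∑ j ∈ range (q.natDegree + 1), ‖q.coeff j‖)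
        + ∑ i ∈ range (p.natDegree + 1), ‖p.coeff i‖ := by
      intro m
      refine (norm_sub_le _ _).trans (add_le_add ?_ ?_)
      · refine (norm_sum_le _ _).trans (sum_le_sum fun j hj => ?_)
        by_cases h : j ≤ m
        · simp only [h, if_true, norm_mul]
          exact mul_le_of_le_one_right (norm_nonneg _) (hanorm _)
        · simp [h]
      · by_cases h : m < p.natDegree + 1
        · exact Finset.single_le_sum (f := fun i => ‖p.coeff i‖)
            (fun i _ => norm_nonneg _) (Finset.mem_range.mpr h)
        · rw [Polynomial.coeff_eq_zero_of_natDegree_lt (by omega), norm_zero]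
          exact Finset.sum_nonneg fun i _ => norm_nonneg _
    have h0 : ∀ t ∈ Metric.ball (0:ℂ) 1, ∑' m : ℕ, b m * t ^ m = 0 := by
      intro t ht
      have htn : ‖t‖ < 1 := by
        have := Metric.mem_ball.mp ht
        rwa [Complex.dist_eq, sub_zero] at this
      have h2 : ∑' m : ℕ, b m * t ^ m
          = q.eval t * (∑' k : ℕ, a k * t ^ k) - p.eval t :=
        (stmt14_rearrange a hanorm q p t htn).symm
      have hft : f t = ∑' k : ℕ, a k * t ^ k := by rw [hfe]
      rw [h2, ← hft, hpq t ht]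
      ring
    have hbz := stmt14_coeff_zero b _ hbbound h0
    refine stmt14_final (n-1) he q hq (q.natDegree + p.natDegree + 1) (fun m hm hm' => ?_)
    have h1 : (∑ j ∈ range (q.natDegree + 1),
        q.coeff j * (if j ≤ m then a (m - j) else 0)) - p.coeff m = 0 := hbz m
    have hp0 : p.coeff m = 0 := Polynomial.coeff_eq_zero_of_natDegree_lt (by omega)
    rw [hp0, sub_zero] at h1
    have h2 : ∑ j ∈ range (q.natDegree + 1), q.coeff j * a (m - j) = 0 := by
      refine (Finset.sum_congr rfl (fun j hj => ?_)).trans h1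
      have hjm : j ≤ m := by have := Finset.mem_range.mp hj; omega
      simp [hjm]
    show ∑ j ∈ q.support, q.coeff j * a (m - j) = 0
    rw [Finset.sum_subset Polynomial.supp_subset_range_natDegree_succ
      (fun j _ hjn => by rw [Polynomial.notMem_support_iff.mp hjn, zero_mul])]
    exact h2
end
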